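/- arXiv:1210.1630 — 3 statements merged into one kernel-verified Lean document; each statement's English description precedes it below -/
import Mathlib

section
/- If a finite set S ⊆ L_f(G) is such that f(S) := ⋃_{w∈S} f(w) equals G, then S is a characteristic sample for the string extension learner: any positive presentation φ of L_f(G) whose initial segment φ[i] has content containing S satisfies Gim_f(φ[j]) generating L_f(G) for all j ≥ i. -/
/-- The string extension learner. -/
def Gim {σ E : Type*} [DecidableEq E] (f : List σ → Finset E)
    (φ : ℕ → Option (List σ)) : ℕ → Finset E
  | 0 => ∅
  | i + 1 =>
    match φ (i + 1) with
    | none => Gim f φ i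
    | some w => Gim f φ i ∪ f w

lemma Gim_mono {σ E : Type*} [DecidableEq E] (f : List σ → Finset E)
    (φ : ℕ → Option (List σ)) {m n : ℕ} (h : m ≤ n) :
    Gim f φ m ⊆ Gim f φ n := by
  induction n with
  | zero => simp_all
  | succ k ih =>
    rcases Nat.lt_or_ge m (k+1) with h' | h'
    · have := ih (Nat.lt_succ_iff.mp h')
      refine this.trans ?_
      show Gim f φ k ⊆ Gim f φ (k+1)
      simp only [Gim]
      cases φ (k+1) with
      | none => exact subset_rfl
      | some w => exact Finset.subset_union_left
    · have : m = k+1 := le_antisymm h h'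
      subst this; exact subset_rfl

lemma Gim_subset {σ E : Type*} [DecidableEq E] (f : List σ → Finset E)
    (φ : ℕ → Option (List σ)) (G : Finset E)
    (h : ∀ n w, φ n = some w → f w ⊆ G) (j : ℕ) :
    Gim f φ j ⊆ G := by
  induction j with
  | zero => simp [Gim]
  | succ k ih =>
    simp only [Gim]
    cases hw : φ (k+1) with
    | none => exact ih
    | some w => exact Finset.union_subset ih (h _ _ hw)

lemma f_subset_Gim {σ E : Type*} [DecidableEq E] (f : List σ → Finset E)
    (φ : ℕ → Option (List σ)) {n : ℕ} {w : List σ} (hn : 1 ≤ n)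
    (hw : φ n = some w) : f w ⊆ Gim f φ n := by
  obtain ⟨m, rfl⟩ := Nat.exists_eq_add_of_le hn
  rw [Nat.add_comm] at hw ⊢
  simp only [Gim]
  rw [hw]
  exact Finset.subset_union_right

/-- If a finite set `S ⊆ L_f(G)` satisfies `⋃_{w ∈ S} f(w) = G`,
then `S` is a characteristic sample: for any positive presentation `φ` of
`L_f(G)` whose initial segment `φ[i]` has content containing `S`, the learner's
hypothesis generates `L_f(G)` for all `j ≥ i`. -/
theorem characteristic_sample_for_string_extension_learner
    {σ E : Type*} [Fintype σ] [DecidableEq E] [DecidableEq (List σ)]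
    (f : List σ → Finset E) (G : Finset E)
    (L : Set (List σ)) (hL : L = {w : List σ | f w ⊆ G})
    (hcanon : (G : Set E) = ⋃ w ∈ L, (f w : Set E))
    (S : Finset (List σ)) (hSsub : ↑S ⊆ L)
    (hSgen : S.biUnion f = G)
    (φ : ℕ → Option (List σ))
    (hsound : ∀ n w, φ n = some w → w ∈ L)
    (hcomplete : ∀ w ∈ L, ∃ n, φ n = some w)
    (i : ℕ)
    -- the content of φ[i] contains S:
    (hcontent : ∀ w ∈ S, ∃ n, 1 ≤ n ∧ n ≤ i ∧ φ n = some w) :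
    ∀ j ≥ i, {w : List σ | f w ⊆ Gim f φ j} = L := by
  intro j hj
  have hGj : Gim f φ j = G := by
    apply le_antisymm
    · exact Gim_subset f φ G (fun n w hw => by
        have := hsound n w hw; rw [hL] at this; exact this) j
    · rw [← hSgen]
      intro x hx
      obtain ⟨w, hwS, hxw⟩ := Finset.mem_biUnion.mp hx
      obtain ⟨n, hn1, hni, hφ⟩ := hcontent w hwS
      exact Gim_mono f φ (hni.trans hj) (f_subset_Gim f φ hn1 hφ hxw)
  rw [hGj, hL]
end

section
/- The Strictly Local hierarchy is strict: for every k ≥ 1 there exists a language that is Strictly (k+1)-Local but not Strictly k-Local (assuming |Σ| ≥ 2). -/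
/-- Boundary-augmented alphabet: letters of `α` plus the two boundary markers
`⋊` (`Sum.inr false`) and `⋉` (`Sum.inr true`). -/
abbrev Aug (α : Type*) := α ⊕ Bool

/-- Augment a word with boundary markers: `⋊ w ⋉`. -/
def aug {α : Type*} (w : List α) : List (Aug α) :=
  Sum.inr false :: (w.map Sum.inl ++ [Sum.inr true])

/-- The `k`-factor function: `{w}` if `|w| ≤ k`, otherwise the set of
length-`k` contiguous substrings (factors) of `w`. -/
def kfac {β : Type*} (k : ℕ) (w : List β) : Set (List β) :=
  if w.length ≤ k then {w} else {u | u.length = k ∧ u <:+: w}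

/-- `L` is Strictly `k`-Local: there is a finite `S ⊆ f_k(⋊Σ*⋉)` with
`L = {w : f_k(⋊w⋉) ⊆ S}`. -/
def IsSL {α : Type*} (k : ℕ) (L : Set (List α)) : Prop :=
  ∃ S : Set (List (Aug α)), S.Finite ∧
    S ⊆ (⋃ w : List α, kfac k (aug w)) ∧
    L = {w : List α | kfac k (aug w) ⊆ S}

open List

/-- An infix of length one less than the list is its long prefix or long suffix. -/
lemma infix_len_pred {β : Type*} {u v : List β} (h : u <:+: v)
    (hl : u.length + 1 = v.length) : u = v.take u.length ∨ u = v.drop 1 := by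
  obtain ⟨s, t, hst⟩ := h
  have hlen : s.length + u.length + t.length = v.length := by
    rw [← hst]; simp; omega
  rcases Nat.eq_zero_or_pos s.length with hs | hs
  · left
    have : s = [] := List.eq_nil_of_length_eq_zero hs
    subst this
    have hpre : u <+: v := ⟨t, by simpa using hst⟩
    exact List.prefix_iff_eq_take.mp hpre
  · right
    have hs1 : s.length = 1 := by omega
    have ht : t = [] := List.eq_nil_of_length_eq_zero (by omega)
    subst ht
    rw [← hst, ← hs1]
    simp [List.drop_left]

lemma suffix_replicate_append {β : Type*} {c y : β} {m : ℕ} {s : List β}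
    (h : s <:+ List.replicate m c ++ [y]) :
    s = [] ∨ ∃ j ≤ m, s = List.replicate j c ++ [y] := by
  induction m with
  | zero =>
    simp only [List.replicate_zero, List.nil_append] at h
    rcases List.suffix_cons_iff.mp h with h | h
    · exact Or.inr ⟨0, le_refl 0, by simpa using h⟩
    · left; exact List.eq_nil_of_suffix_nil h
  | succ n ih =>
    rw [List.replicate_succ, List.cons_append] at h
    rcases List.suffix_cons_iff.mp h with h | h
    · exact Or.inr ⟨n + 1, le_refl _, by simpa [List.replicate_succ] using h⟩
    · rcases ih h with h | ⟨j, hj, hjs⟩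
      · exact Or.inl h
      · exact Or.inr ⟨j, by omega, hjs⟩

lemma prefix_replicate_append {β : Type*} {c y : β} {m : ℕ} {u : List β}
    (h : u <+: List.replicate m c ++ [y]) (hlen : u.length ≤ m) :
    u = List.replicate u.length c := by
  have := List.prefix_iff_eq_take.mp h
  rwa [List.take_append_of_le_length (by simpa using hlen), List.take_replicate,
    Nat.min_eq_left hlen] at this

/-- Key lemma: every infix of `⋊ cᵐ⁺¹ ⋉` of length ≤ m is an infix of `⋊ cᵐ ⋉`. -/
lemma infix_shrink {β : Type*} {x c y : β} {m : ℕ} {u : List β}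
    (h : u <:+: x :: (List.replicate (m + 1) c ++ [y])) (hlen : u.length ≤ m) :
    u <:+: x :: (List.replicate m c ++ [y]) := by
  obtain ⟨t, hut, hts⟩ := List.infix_iff_prefix_suffix.mp h
  rcases List.suffix_cons_iff.mp hts with rfl | hts
  · -- u is a prefix of the whole list
    have := List.prefix_iff_eq_take.mp hut
    rcases Nat.eq_zero_or_pos u.length with h0 | h0
    · rw [List.eq_nil_of_length_eq_zero h0]; exact List.nil_infix
    · obtain ⟨n, hn⟩ : ∃ n, u.length = n + 1 := ⟨u.length - 1, by omega⟩
      rw [hn, List.take_succ_cons, List.take_append_of_le_length (by simp; omega),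
        List.take_replicate, Nat.min_eq_left (by omega)] at this
      apply List.IsPrefix.isInfix
      rw [List.prefix_iff_eq_take, hn, List.take_succ_cons,
        List.take_append_of_le_length (by simp; omega),
        List.take_replicate, Nat.min_eq_left (by omega)]
      exact this
  · rcases suffix_replicate_append hts with rfl | ⟨j, hj, rfl⟩
    · rw [List.prefix_nil.mp hut]; exact List.nil_infix
    · rcases le_or_gt u.length j with hle | hlt
      · -- u fits inside the replicate part
        rw [prefix_replicate_append hut hle]
        refine List.IsInfix.trans ⟨[], List.replicate (m - u.length) c, ?_⟩
          (⟨[x], [y], by simp⟩ : List.replicate m c <:+: _)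
        rw [List.nil_append, ← List.replicate_add]
        congr 1
        omega
      · -- u is the whole t = replicate j c ++ [y]
        have : u = List.replicate j c ++ [y] :=
          hut.eq_of_length_le (by simp; omega)
        subst this
        apply List.IsSuffix.isInfix
        apply List.IsSuffix.trans (l₂ := List.replicate m c ++ [y]) ?_ (List.suffix_cons _ _)
        have : List.replicate m c = List.replicate (m - j) c ++ List.replicate j c := by
          rw [← List.replicate_add]; congr 1; omega
        rw [this, List.append_assoc]
        exact List.suffix_append _ _

/-- The SL hierarchy is strict: for every `k ≥ 1` (and `|Σ| ≥ 2`)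
there is a language that is Strictly `(k+1)`-Local but not Strictly `k`-Local. -/
theorem SL_hierarchy_strict {α : Type*} [Fintype α]
    (hcard : 2 ≤ Fintype.card α) (k : ℕ) (hk : 1 ≤ k) :
    ∃ L : Set (List α), IsSL (k + 1) L ∧ ¬ IsSL k L := by
  obtain ⟨a⟩ : Nonempty α := Fintype.card_pos_iff.mp (by omega)
  set A : Aug α := Sum.inl a with hA
  have haug : ∀ n : ℕ, aug (List.replicate n a)
      = Sum.inr false :: (List.replicate n A ++ [Sum.inr true]) := by
    intro n; simp [aug, List.map_replicate, hA]
  have hauglen : ∀ w : List α, (aug w).length = w.length + 2 := by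
    intro w; simp [aug]
  refine ⟨{List.replicate k a}, ?_, ?_⟩
  · -- SL (k+1)
    refine ⟨{Sum.inr false :: List.replicate k A, List.replicate k A ++ [Sum.inr true]},
      (Set.finite_singleton _).insert _, ?_, ?_⟩
    · intro u hu
      refine Set.mem_iUnion.mpr ⟨List.replicate k a, ?_⟩
      have hlen : ¬ (aug (List.replicate k a)).length ≤ k + 1 := by
        rw [hauglen, List.length_replicate]; omega
      rw [kfac, if_neg hlen]
      rcases hu with rfl | rfl
      · refine ⟨by simp, ?_⟩
        rw [haug]
        exact ⟨[], [Sum.inr true], by simp⟩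
      · refine ⟨by simp, ?_⟩
        rw [haug]
        exact (List.suffix_cons _ _).isInfix
    · ext w
      simp only [Set.mem_singleton_iff, Set.mem_setOf_eq]
      constructor
      · rintro rfl
        intro u hu
        have hlen : ¬ (aug (List.replicate k a)).length ≤ k + 1 := by
          rw [hauglen, List.length_replicate]; omega
        rw [kfac, if_neg hlen] at hu
        obtain ⟨hul, hui⟩ := hu
        rcases infix_len_pred hui (by simp [hul, hauglen]) with h | h
        · left
          rw [h, hul, haug, List.take_succ_cons,
            List.take_append_of_le_length (by simp), List.take_replicate,
            Nat.min_eq_left le_rfl]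
        · right
          rw [h, haug]; simp
      · intro hsub
        by_cases hlen : (aug w).length ≤ k + 1
        · exfalso
          have hmem : aug w ∈ kfac (k + 1) (aug w) := by
            rw [kfac, if_pos hlen]; rfl
          rcases hsub hmem with h | h
          · have h' : w.map Sum.inl ++ [Sum.inr true] = List.replicate k A := by
              simpa [aug] using h
            have : (Sum.inr true : Aug α) = A :=
              List.eq_of_mem_replicate (by rw [← h']; simp)
            simp [hA] at this
          · have h' : (Sum.inr false : Aug α) ∈ List.replicate k A ++ [Sum.inr true] := by
              rw [← h]; simp [aug]
            rcases List.mem_append.mp h' with h'' | h''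
            · have := List.eq_of_mem_replicate h''
              simp [hA] at this
            · simp at h''
        · -- |w| ≥ k
          have hwk : k ≤ w.length := by rw [hauglen] at hlen; omega
          rcases eq_or_lt_of_le hwk with heq | hlt
          · -- |w| = k : use the long prefix
            have hu : (Sum.inr false :: w.map Sum.inl) ∈ kfac (k + 1) (aug w) := by
              rw [kfac, if_neg hlen]
              refine ⟨by simp [← heq], ?_⟩
              exact ⟨[], [Sum.inr true], by simp [aug]⟩
            rcases hsub hu with h | h
            · have : w.map Sum.inl = List.replicate k A := by
                simpa using h
              rw [hA, ← List.map_replicate] at this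
              exact List.map_injective_iff.mpr Sum.inl_injective this
            · exfalso
              have : (Sum.inr true : Aug α) ∈ Sum.inr false :: w.map Sum.inl := by
                rw [h]; simp
              rcases List.mem_cons.mp this with h' | h'
              · simp at h'
              · obtain ⟨x, _, hx⟩ := List.mem_map.mp h'
                simp at hx
          · -- |w| ≥ k+1 : contradiction
            exfalso
            have hu : (w.map Sum.inl).take (k + 1) ∈ kfac (k + 1) (aug w) := by
              rw [kfac, if_neg hlen]
              refine ⟨by simp; omega, ?_⟩
              refine ((w.map Sum.inl).take_prefix (k+1)).isInfix.trans ?_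
              exact ⟨[Sum.inr false], [Sum.inr true], by simp [aug]⟩
            have hall : ∀ b ∈ (w.map (Sum.inl : α → Aug α)).take (k + 1), ∃ x : α, b = Sum.inl x := by
              intro b hb
              obtain ⟨x, _, hx⟩ := List.mem_map.mp (List.mem_of_mem_take hb)
              exact ⟨x, hx.symm⟩
            rcases hsub hu with h | h
            · obtain ⟨x, hx⟩ := hall (Sum.inr false) (by rw [h]; simp)
              simp at hx
            · obtain ⟨x, hx⟩ := hall (Sum.inr true) (by rw [h]; simp)
              simp at hx
  · -- not SL k
    rintro ⟨S, -, -, hL⟩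
    have hmemk : List.replicate k a ∈ {w : List α | kfac k (aug w) ⊆ S} := by
      rw [← hL]; rfl
    have hmemk1 : List.replicate (k + 1) a ∈ {w : List α | kfac k (aug w) ⊆ S} := by
      intro u hu
      apply hmemk
      have hlen1 : ¬ (aug (List.replicate (k+1) a)).length ≤ k := by
        rw [hauglen, List.length_replicate]; omega
      have hlen0 : ¬ (aug (List.replicate k a)).length ≤ k := by
        rw [hauglen, List.length_replicate]; omega
      rw [kfac, if_neg hlen1] at hu
      rw [kfac, if_neg hlen0]
      obtain ⟨hul, hui⟩ := hu
      rw [haug] at hui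
      refine ⟨hul, ?_⟩
      rw [haug]
      exact infix_shrink hui (by omega)
    rw [← hL] at hmemk1
    have := congrArg List.length (Set.mem_singleton_iff.mp hmemk1)
    simp at this
end

section
/- Every Strictly k-Local language is closed under suffix substitution: if w₁ = x₁ u y₁ and w₂ = x₂ u y₂ are both in L with |u| = k−1, then x₁ u y₂ ∈ L. -/
lemma infix_of_append_split {β : Type*} {v : List β} (X Y Z : List β)
    (hv : v.length = Y.length + 1) (h : v <:+: X ++ (Y ++ Z)) :
    v <:+: X ++ Y ∨ v <:+: Y ++ Z := by
  obtain ⟨s, t, hst⟩ := h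
  by_cases hs : s.length < X.length
  · left
    have h1 : s ++ v <+: X ++ (Y ++ Z) := ⟨t, by simpa [List.append_assoc] using hst⟩
    have h2 : X ++ Y <+: X ++ (Y ++ Z) := ⟨Z, by simp⟩
    have h3 : s ++ v <+: X ++ Y := by
      apply List.prefix_of_prefix_length_le h1 h2
      simp [hv]; omega
    exact List.IsInfix.trans ⟨s, [], by simp⟩ h3.isInfix
  · right
    have h1 : v ++ t <:+ X ++ (Y ++ Z) := ⟨s, by simpa [List.append_assoc] using hst⟩
    have h2 : Y ++ Z <:+ X ++ (Y ++ Z) := ⟨X, rfl⟩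
    have hlen : s.length + (v.length + t.length) = X.length + (Y.length + Z.length) := by
      have := congrArg List.length hst; simpa using this
    have h3 : v ++ t <:+ Y ++ Z := by
      apply List.suffix_of_suffix_length_le h1 h2
      simp; omega
    exact List.IsInfix.trans ⟨[], t, by simp⟩ h3.isInfix

lemma aug_split {α : Type*} (x u y : List α) :
    aug (x ++ u ++ y) =
      (Sum.inr false :: x.map Sum.inl) ++
        (u.map Sum.inl ++ (y.map Sum.inl ++ [Sum.inr true])) := by
  simp [aug, List.append_assoc]

lemma kfac_aug_eq {α : Type*} (k : ℕ) (w : List α) (hw : k ≤ w.length + 1) :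
    kfac k (aug w) = {v | v.length = k ∧ v <:+: aug w} := by
  have : (aug w).length = w.length + 2 := by simp [aug]
  rw [kfac, if_neg (by omega)]

/-- Every Strictly `k`-Local language is closed under suffix
substitution: if `x₁ u y₁ ∈ L` and `x₂ u y₂ ∈ L` with `|u| = k − 1`, then
`x₁ u y₂ ∈ L`. -/
theorem SL_suffix_substitution_closure {α : Type*} [Fintype α]
    (k : ℕ) (L : Set (List α)) (h : IsSL k L)
    (x₁ u y₁ x₂ y₂ : List α) (hu : u.length = k - 1)
    (h₁ : x₁ ++ u ++ y₁ ∈ L) (h₂ : x₂ ++ u ++ y₂ ∈ L) :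
    x₁ ++ u ++ y₂ ∈ L := by
  obtain ⟨S, hSfin, hSsub, hL⟩ := h
  subst hL
  simp only [Set.mem_setOf_eq] at h₁ h₂ ⊢
  have hlen : ∀ x y : List α, k ≤ (x ++ u ++ y).length + 1 := by
    intro x y; simp; omega
  rw [kfac_aug_eq k _ (hlen x₁ y₁)] at h₁
  rw [kfac_aug_eq k _ (hlen x₂ y₂)] at h₂
  rw [kfac_aug_eq k _ (hlen x₁ y₂)]
  rintro v ⟨hvl, hvi⟩
  rcases Nat.eq_zero_or_pos k with hk | hk
  · have hv0 : v = [] := List.length_eq_zero_iff.mp (by omega)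
    exact h₁ ⟨by subst hv0; simpa using hvl, by simp [hv0]⟩
  · set P₁ : List (Aug α) := Sum.inr false :: x₁.map Sum.inl
    set P₂ : List (Aug α) := Sum.inr false :: x₂.map Sum.inl
    set U : List (Aug α) := u.map Sum.inl
    set Q₁ : List (Aug α) := y₁.map Sum.inl ++ [Sum.inr true]
    set Q₂ : List (Aug α) := y₂.map Sum.inl ++ [Sum.inr true]
    have hUlen : v.length = U.length + 1 := by simp [U, hvl]; omega
    have hvi' : v <:+: P₁ ++ (U ++ Q₂) := by rwa [aug_split] at hvi
    rcases infix_of_append_split P₁ U Q₂ hUlen hvi' with hc | hc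
    · refine h₁ ⟨hvl, ?_⟩
      rw [aug_split]
      exact hc.trans ⟨[], Q₁, by simp [P₁, U, Q₁, List.append_assoc]⟩
    · refine h₂ ⟨hvl, ?_⟩
      rw [aug_split]
      exact hc.trans ⟨P₂, [], by simp [P₂, U, Q₂, List.append_assoc]⟩
end
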